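/- arXiv:1310.5779 — 13 statements merged into one kernel-verified Lean document; each statement's English description precedes it below -/
import Mathlib

section
/- If f is a weak IASI of a finite simple graph G, then every edge uv of G has at least one end vertex whose set-label is a singleton, i.e., |f(u)| = 1 or |f(v)| = 1. -/
open Pointwise

/-- An integer additive set-indexer (IASI) of a simple graph `G`: an injective
assignment of nonempty finite sets of naturals to the vertices such that the
induced sumset-labeling of edges is injective on the edge set. -/
def IsIASI {V : Type*} (G : SimpleGraph V) (f : V → Finset ℕ) : Prop :=
  (∀ v, (f v).Nonempty) ∧ Function.Injective f ∧
    ∀ ⦃u v u' v' : V⦄, G.Adj u v → G.Adj u' v' →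
      f u + f v = f u' + f v' → s(u, v) = s(u', v')

/-- A weak IASI of `G`: an IASI in which every edge `uv` has set-indexing number
`max |f u| |f v|`. -/
def IsWeakIASI {V : Type*} (G : SimpleGraph V) (f : V → Finset ℕ) : Prop :=
  IsIASI G f ∧ ∀ ⦃u v : V⦄, G.Adj u v → (f u + f v).card = max (f u).card (f v).card

/-- The number of mono-indexed edges of `G` under the labeling `f`, i.e. the number
of edges whose set-indexing number is `1`. -/
noncomputable def monoEdgeCount {V : Type*} (G : SimpleGraph V) (f : V → Finset ℕ) : ℕ :=
  {e | e ∈ G.edgeSet ∧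
    Sym2.lift ⟨fun u v => (f u + f v).card, fun u v => by simp [add_comm]⟩ e = 1}.ncard

/-- The sparing number of `G`: the minimum number of mono-indexed edges over all
weak IASIs of `G`. -/
noncomputable def sparingNumber {V : Type*} (G : SimpleGraph V) : ℕ :=
  sInf {n | ∃ f : V → Finset ℕ, IsWeakIASI G f ∧ monoEdgeCount G f = n}

/-- In a weak IASI, every edge has an end vertex whose set-label is a singleton. -/
theorem weakIASI_endpoint_singleton {V : Type*} [Fintype V] (G : SimpleGraph V)
    (f : V → Finset ℕ) (hf : IsWeakIASI G f) :
    ∀ u v : V, G.Adj u v → (f u).card = 1 ∨ (f v).card = 1 := by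
  intro u v huv
  have hcd := cauchy_davenport_add_of_linearOrder_isCancelAdd (hf.1.1 u) (hf.1.1 v)
  have hmax := hf.2 huv
  have hu1 := (hf.1.1 u).card_pos
  have hv1 := (hf.1.1 v).card_pos
  omega
end

section
/- Every graph has a set-indexer: for every finite simple graph G there exist a natural number n and an injective function f from the vertex set of G to the subsets of Fin n such that the induced map sending each edge uv to the symmetric difference f(u) ∆ f(v) is injective on the edge set of G and satisfies f(u) ∆ f(v) ≠ ∅ for every edge uv. -/
lemma symmDiff_singleton_ne {α : Type*} [DecidableEq α] {a b : α} (h : a ≠ b) :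
    symmDiff ({a} : Finset α) {b} = {a, b} := by
  ext x
  simp only [symmDiff, Finset.sup_eq_union, Finset.mem_union, Finset.mem_sdiff,
    Finset.mem_singleton, Finset.mem_insert]
  constructor
  · rintro (⟨h1, _⟩ | ⟨h1, _⟩) <;> simp [h1]
  · rintro (rfl | rfl)
    · exact Or.inl ⟨rfl, h⟩
    · exact Or.inr ⟨rfl, fun hh => h hh.symm⟩

/-- Every finite simple graph has a set-indexer: an injective assignment of subsets
of a finite ground set `Fin n` to the vertices such that the induced symmetric
difference labeling of edges is injective on the edge set and never empty. -/
theorem exists_setIndexer {V : Type*} [Fintype V] (G : SimpleGraph V) :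
    ∃ (n : ℕ) (f : V → Finset (Fin n)), Function.Injective f ∧
      (∀ u v : V, G.Adj u v → symmDiff (f u) (f v) ≠ ∅) ∧
      (∀ u v u' v' : V, G.Adj u v → G.Adj u' v' →
        symmDiff (f u) (f v) = symmDiff (f u') (f v') → s(u, v) = s(u', v')) := by
  classical
  let e := Fintype.equivFin V
  refine ⟨Fintype.card V, fun v => {e v}, ?_, ?_, ?_⟩
  · intro u v h
    simpa using e.injective (Finset.singleton_injective h)
  · intro u v h
    rw [symmDiff_singleton_ne (fun hh => h.ne (e.injective hh))]
    simp
  · intro u v u' v' h h' heq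
    rw [symmDiff_singleton_ne (fun hh => h.ne (e.injective hh)),
      symmDiff_singleton_ne (fun hh => h'.ne (e.injective hh))] at heq
    have hset : ({e u, e v} : Set (Fin (Fintype.card V))) = {e u', e v'} := by
      have := congrArg (fun s : Finset (Fin (Fintype.card V)) => (s : Set (Fin (Fintype.card V)))) heq
      simpa using this
    have := Set.pair_eq_pair_iff.mp hset
    rcases this with ⟨h1, h2⟩ | ⟨h1, h2⟩
    · rw [e.injective h1, e.injective h2]
    · rw [e.injective h1, e.injective h2, Sym2.eq_swap]
end

section
/- A finite simple graph G admits a 2-uniform IASI if and only if G is bipartite (i.e., 2-colorable). -/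
open Pointwise

lemma pair_succ_eq_iff {x y : ℕ} (h : ({x, x+1} : Finset ℕ) = {y, y+1}) : x = y := by
  have h1 : x ∈ ({y, y+1} : Finset ℕ) := h ▸ by simp
  have h2 : y ∈ ({x, x+1} : Finset ℕ) := h ▸ by simp
  simp at h1 h2; omega

lemma digit_unique {M a b a' b' : ℕ} (hM : 0 < M) (hb : b < M) (hb' : b' < M)
    (h : M * a + b = M * a' + b') : a = a' ∧ b = b' := by
  have hbb : b = b' := by
    have := congrArg (· % M) h
    simpa [Nat.mul_add_mod, Nat.mod_eq_of_lt hb, Nat.mod_eq_of_lt hb'] using this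
  subst hbb
  exact ⟨Nat.eq_of_mul_eq_mul_left hM (by omega), rfl⟩


/-- A finite simple graph admits a 2-uniform IASI iff it is bipartite. -/
theorem twoUniformIASI_iff_bipartite {V : Type*} [Fintype V] (G : SimpleGraph V) :
    (∃ f : V → Finset ℕ, IsIASI G f ∧
      ∀ ⦃u v : V⦄, G.Adj u v → (f u + f v).card = 2) ↔ G.Colorable 2 := by
  constructor
  · rintro ⟨f, ⟨hne, hinj, hedge⟩, hcard⟩
    refine ⟨SimpleGraph.Coloring.mk (fun v => if (f v).card = 1 then 0 else 1) ?_⟩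
    intro u v huv
    have h2 : (f u + f v).card = 2 := hcard huv
    have hcd : (f u).card + (f v).card - 1 ≤ 2 := by
      rw [← h2]; exact cauchy_davenport_add_of_linearOrder_isCancelAdd (hne u) (hne v)
    have hmul : 2 ≤ (f u).card * (f v).card := by
      rw [← h2]; exact Finset.card_add_le
    have hu1 : 1 ≤ (f u).card := (hne u).card_pos
    have hv1 : 1 ≤ (f v).card := (hne v).card_pos
    have hor : ((f u).card = 1 ∧ (f v).card = 2) ∨ ((f u).card = 2 ∧ (f v).card = 1) := by
      set a := (f u).card; set b := (f v).card
      have ha : a ≤ 2 := by omega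
      have hb : b ≤ 2 := by omega
      interval_cases a <;> interval_cases b <;> omega
    simp only [ne_eq]
    rcases hor with ⟨h1, h2'⟩ | ⟨h1, h2'⟩ <;> simp [h1, h2']
  · rintro ⟨C⟩
    classical
    set n := Fintype.card V with hn
    set M := n + 2 with hM
    set e : V ≃ Fin n := Fintype.equivFin V with he
    set f : V → Finset ℕ := fun v =>
      if C v = 0 then {M * M * (e v : ℕ), M * M * (e v : ℕ) + 1}
      else {M * (e v : ℕ) + 2} with hf
    have hMpos : 0 < M := by omega
    have fin2 : ∀ i : Fin 2, i ≠ 0 → i = 1 := by decide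
    have einj : ∀ a b : V, (e a : ℕ) = (e b : ℕ) → a = b := fun a b h =>
      e.injective (Fin.ext h)
    -- the sumset over a (0,1)-colored pair
    have hsum : ∀ a b : V, C a = 0 → C b ≠ 0 →
        f a + f b = {M * M * (e a : ℕ) + (M * (e b : ℕ) + 2),
                     M * M * (e a : ℕ) + (M * (e b : ℕ) + 2) + 1} := by
      intro a b ha hb
      simp only [hf, ha, if_true, if_neg hb]
      ext x; simp [Finset.mem_add]; omega
    have hcard2 : ∀ a b : V, C a = 0 → C b ≠ 0 → (f a + f b).card = 2 := by
      intro a b ha hb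
      rw [hsum a b ha hb, Finset.card_insert_of_notMem (by simp), Finset.card_singleton]
    -- decoding a sumset over oriented pairs
    have hlt : ∀ v : V, M * (e v : ℕ) + 2 < M * M := by
      intro v
      have h1 : (e v : ℕ) + 1 ≤ n := (e v).isLt
      calc M * (e v : ℕ) + 2 < M * (e v : ℕ) + M := by omega
        _ = M * ((e v : ℕ) + 1) := by ring
        _ ≤ M * M := Nat.mul_le_mul_left _ (by omega)
    have hdec : ∀ a b a' b' : V, C a = 0 → C b ≠ 0 → C a' = 0 → C b' ≠ 0 →
        f a + f b = f a' + f b' → a = a' ∧ b = b' := by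
      intro a b a' b' ha hb ha' hb' hEq
      rw [hsum a b ha hb, hsum a' b' ha' hb'] at hEq
      have hkey := pair_succ_eq_iff hEq
      obtain ⟨h1, h2⟩ := digit_unique (Nat.mul_pos hMpos hMpos) (hlt b) (hlt b') hkey
      refine ⟨einj _ _ h1, ?_⟩
      exact einj _ _ (Nat.eq_of_mul_eq_mul_left hMpos (by omega))
    -- orient an edge
    have orient : ∀ u v : V, G.Adj u v →
        (C u = 0 ∧ C v ≠ 0) ∨ (C v = 0 ∧ C u ≠ 0) := by
      intro u v huv
      have hne' : C u ≠ C v := C.valid huv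
      by_cases h : C u = 0
      · exact Or.inl ⟨h, fun hv => hne' (h.trans hv.symm)⟩
      · exact Or.inr ⟨by
          have := fin2 _ h
          rcases (show C v = 0 ∨ C v = 1 from by
            by_cases hv : C v = 0
            · exact Or.inl hv
            · exact Or.inr (fin2 _ hv)) with hv | hv
          · exact hv
          · exact absurd (this.trans hv.symm) hne', h⟩
    refine ⟨f, ⟨?_, ?_, ?_⟩, ?_⟩
    · intro v
      by_cases h : C v = 0 <;> simp [hf, h]
    · intro u v huv
      by_cases hu : C u = 0 <;> by_cases hv : C v = 0
      · simp only [hf, hu, hv, if_true] at huv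
        have := pair_succ_eq_iff huv
        exact einj _ _ (Nat.eq_of_mul_eq_mul_left (Nat.mul_pos hMpos hMpos) this)
      · exfalso
        simp only [hf, hu, hv, if_true, if_neg hv] at huv
        have : ({M * M * (e u : ℕ), M * M * (e u : ℕ) + 1} : Finset ℕ).card = 1 := by
          rw [huv]; exact Finset.card_singleton _
        rw [Finset.card_insert_of_notMem (by simp)] at this
        simp at this
      · exfalso
        simp only [hf, hv, if_true, if_neg hu] at huv
        have : ({M * M * (e v : ℕ), M * M * (e v : ℕ) + 1} : Finset ℕ).card = 1 := by
          rw [← huv]; exact Finset.card_singleton _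
        rw [Finset.card_insert_of_notMem (by simp)] at this
        simp at this
      · simp only [hf, if_neg hu, if_neg hv, Finset.singleton_inj] at huv
        exact einj _ _ (Nat.eq_of_mul_eq_mul_left hMpos (by omega))
    · intro u v u' v' huv hu'v' hEq
      rcases orient u v huv with ⟨h1, h2⟩ | ⟨h1, h2⟩ <;>
        rcases orient u' v' hu'v' with ⟨h1', h2'⟩ | ⟨h1', h2'⟩
      · obtain ⟨rfl, rfl⟩ := hdec u v u' v' h1 h2 h1' h2' hEq
        rfl
      · obtain ⟨rfl, rfl⟩ := hdec u v v' u' h1 h2 h1' h2' (hEq.trans (add_comm _ _))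
        exact Sym2.eq_swap
      · obtain ⟨rfl, rfl⟩ := hdec v u u' v' h1 h2 h1' h2' ((add_comm _ _).trans hEq)
        exact Sym2.eq_swap
      · obtain ⟨rfl, rfl⟩ := hdec v u v' u' h1 h2 h1' h2'
          ((add_comm _ _).trans (hEq.trans (add_comm _ _)))
        rfl
    · intro u v huv
      rcases orient u v huv with ⟨h1, h2⟩ | ⟨h1, h2⟩
      · exact hcard2 u v h1 h2
      · rw [add_comm]; exact hcard2 v u h1 h2
end

section
/- For each integer k > 1, a finite simple graph G admits a weakly k-uniform IASI if and only if G is bipartite (i.e., 2-colorable). -/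
open Pointwise

private lemma iasi_encode_inj {M k : ℕ} (hk : 0 < k) {x x' : ℕ}
    (h : (Finset.range k).image (fun j => x + j * M)
       = (Finset.range k).image (fun j => x' + j * M)) :
    x = x' := by
  have h1 : x ∈ (Finset.range k).image (fun j => x' + j * M) := by
    rw [← h]; exact Finset.mem_image.2 ⟨0, Finset.mem_range.2 hk, by simp⟩
  have h2 : x' ∈ (Finset.range k).image (fun j => x + j * M) := by
    rw [h]; exact Finset.mem_image.2 ⟨0, Finset.mem_range.2 hk, by simp⟩
  obtain ⟨j, _, hj⟩ := Finset.mem_image.1 h1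
  obtain ⟨j', _, hj'⟩ := Finset.mem_image.1 h2
  have hx : x' ≤ x := hj ▸ Nat.le_add_right _ _
  have hx' : x ≤ x' := hj' ▸ Nat.le_add_right _ _
  omega

private lemma iasi_card_img {M k x : ℕ} (hM : 0 < M) :
    ((Finset.range k).image (fun j => x + j * M)).card = k := by
  rw [Finset.card_image_of_injective _ fun i j h => ?_, Finset.card_range]
  have h' : i * M = j * M := by omega
  exact Nat.eq_of_mul_eq_mul_right hM h'

private lemma iasi_decode {M a b a' b' : ℕ} (ha : a < M) (ha' : a' < M)
    (h : a + M * b = a' + M * b') : a = a' ∧ b = b' := by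
  have h1 : a = a' := by
    have := congrArg (· % M) h
    simpa [Nat.add_mul_mod_self_left, Nat.mod_eq_of_lt ha, Nat.mod_eq_of_lt ha'] using this
  refine ⟨h1, ?_⟩
  subst h1
  have h2 : M * b = M * b' := by omega
  exact Nat.eq_of_mul_eq_mul_left (by omega) h2

private lemma iasi_singleton_add (a : ℕ) (s : Finset ℕ) :
    ({a} : Finset ℕ) + s = s.image (a + ·) := by
  ext x
  simp only [Finset.mem_add, Finset.mem_image, Finset.mem_singleton]
  constructor
  · rintro ⟨y, rfl, z, hz, rfl⟩; exact ⟨z, hz, rfl⟩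
  · rintro ⟨z, hz, rfl⟩; exact ⟨a, rfl, z, hz, rfl⟩

/-- For `k > 1`, a finite simple graph admits a weakly `k`-uniform IASI iff it is
bipartite. -/
theorem weaklyUniformIASI_iff_bipartite {V : Type*} [Fintype V] (G : SimpleGraph V)
    (k : ℕ) (hk : 1 < k) :
    (∃ f : V → Finset ℕ, IsWeakIASI G f ∧
      ∀ ⦃u v : V⦄, G.Adj u v → (f u + f v).card = k) ↔ G.Colorable 2 := by
  classical
  constructor
  · rintro ⟨f, ⟨⟨hne, _, _⟩, hweak⟩, hunif⟩
    refine ⟨SimpleGraph.Coloring.mk (fun v => if (f v).card = 1 then 0 else 1) ?_⟩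
    intro u v huv h
    have hcard := hunif huv
    have hmax := hweak huv
    have hCD := cauchy_davenport_add_of_linearOrder_isCancelAdd (hne u) (hne v)
    have h1 : 1 ≤ (f u).card := (hne u).card_pos
    have h2 : 1 ≤ (f v).card := (hne v).card_pos
    have hmm : (f u).card + (f v).card - 1 ≤ max (f u).card (f v).card := by
      rw [← hmax]; exact hCD
    by_cases hu1 : (f u).card = 1 <;> by_cases hv1 : (f v).card = 1 <;>
      simp only [hu1, hv1, if_pos, if_neg, if_true, if_false] at h
    · rw [hmax, hu1, hv1] at hcard; omega
    · exact absurd h (by decide)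
    · exact absurd h (by decide)
    · rcases le_total (f u).card (f v).card with hle | hle
      · rw [max_eq_right hle] at hmm; omega
      · rw [max_eq_left hle] at hmm; omega
  · rintro ⟨c⟩
    set M : ℕ := Fintype.card V + 1 with hM
    set g : V → ℕ := fun v => (Fintype.equivFin V v : ℕ) with hg
    have hginj : Function.Injective g := fun u v h =>
      (Fintype.equivFin V).injective (Fin.ext h)
    have hgM : ∀ v, g v < M := fun v => Nat.lt_succ_of_lt (Fin.is_lt _)
    set f : V → Finset ℕ := fun v =>
      if c v = 0 then {g v}
      else (Finset.range k).image (fun j => M * g v + j * M ^ 2) with hf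
    have hfin : ∀ v, c v = 0 → f v = {g v} := fun v h => by simp [hf, h]
    have hfout : ∀ v, c v ≠ 0 →
        f v = (Finset.range k).image (fun j => M * g v + j * M ^ 2) :=
      fun v h => by simp [hf, h]
    have hrepr : ∀ u v : V, c u = 0 → c v ≠ 0 →
        f u + f v = (Finset.range k).image (fun j => (g u + M * g v) + j * M ^ 2) := by
      intro u v h0 h1
      rw [hfin u h0, hfout v h1, iasi_singleton_add, Finset.image_image]
      apply Finset.image_congr
      intro j _
      show g u + (M * g v + j * M ^ 2) = (g u + M * g v) + j * M ^ 2
      ring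
    have hM2 : 0 < M ^ 2 := by positivity
    have hcards : ∀ v, c v ≠ 0 → (f v).card = k := by
      intro v h
      rw [hfout v h]; exact iasi_card_img hM2
    have hcard1 : ∀ v, c v = 0 → (f v).card = 1 := by
      intro v h; rw [hfin v h]; exact Finset.card_singleton _
    have hfin2 : ∀ x : Fin 2, x = 0 ∨ x = 1 := by decide
    -- key injectivity on edges with chosen orientation
    have key : ∀ u v u' v' : V, c u = 0 → c u' = 0 → G.Adj u v → G.Adj u' v' →
        f u + f v = f u' + f v' → u = u' ∧ v = v' := by
      intro u v u' v' h0 h0' hadj hadj' hsum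
      have hv : c v ≠ 0 := fun hcv => (c.valid hadj) (h0.trans hcv.symm)
      have hv' : c v' ≠ 0 := fun hcv => (c.valid hadj') (h0'.trans hcv.symm)
      rw [hrepr u v h0 hv, hrepr u' v' h0' hv'] at hsum
      have hx := iasi_encode_inj (by omega) hsum
      obtain ⟨hgu, hgv⟩ := iasi_decode (hgM u) (hgM u') hx
      exact ⟨hginj hgu, hginj hgv⟩
    -- the edge sumset-card lemma
    have hcardk : ∀ ⦃u v : V⦄, G.Adj u v → (f u + f v).card = k := by
      intro u v hadj
      have hne := c.valid hadj
      rcases hfin2 (c u) with h0 | h1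
      · have hv : c v ≠ 0 := fun hcv => hne (h0.trans hcv.symm)
        rw [hrepr u v h0 hv]; exact iasi_card_img hM2
      · have hv : c v = 0 := by
          rcases hfin2 (c v) with h | h
          · exact h
          · exact absurd (h1.trans h.symm) hne
        have hu : c u ≠ 0 := by rw [h1]; decide
        rw [add_comm, hrepr v u hv hu]; exact iasi_card_img hM2
    refine ⟨f, ⟨⟨?_, ?_, ?_⟩, ?_⟩, hcardk⟩
    · -- nonempty
      intro v
      by_cases h : c v = 0
      · rw [hfin v h]; exact Finset.singleton_nonempty _
      · rw [hfout v h]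
        exact (Finset.nonempty_range_iff.2 (by omega)).image _
    · -- injective
      intro u v huv
      by_cases h0 : c u = 0 <;> by_cases h1 : c v = 0
      · rw [hfin u h0, hfin v h1] at huv
        exact hginj (Finset.singleton_injective huv)
      · have ha := hcard1 u h0; have hb := hcards v h1
        rw [huv] at ha; omega
      · have ha := hcards u h0; have hb := hcard1 v h1
        rw [huv] at ha; omega
      · rw [hfout u h0, hfout v h1] at huv
        have hx := iasi_encode_inj (k := k) (by omega) huv
        exact hginj (Nat.eq_of_mul_eq_mul_left (by omega) hx)
    · -- edge injectivity
      intro u v u' v' hadj hadj' hsum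
      rcases hfin2 (c u) with h0 | h1 <;> rcases hfin2 (c u') with h0' | h1'
      · obtain ⟨rfl, rfl⟩ := key u v u' v' h0 h0' hadj hadj' hsum
        rfl
      · have h0' : c v' = 0 := by
          rcases hfin2 (c v') with h | h
          · exact h
          · exact absurd (h1'.trans h.symm) (c.valid hadj')
        obtain ⟨rfl, rfl⟩ := key u v v' u' h0 h0' hadj hadj'.symm
          (by rw [hsum, add_comm])
        exact Sym2.eq_swap
      · have h0 : c v = 0 := by
          rcases hfin2 (c v) with h | h
          · exact h
          · exact absurd (h1.trans h.symm) (c.valid hadj)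
        obtain ⟨rfl, rfl⟩ := key v u u' v' h0 h0' hadj.symm hadj'
          (by rw [← hsum, add_comm])
        exact Sym2.eq_swap
      · have h0 : c v = 0 := by
          rcases hfin2 (c v) with h | h
          · exact h
          · exact absurd (h1.trans h.symm) (c.valid hadj)
        have h0' : c v' = 0 := by
          rcases hfin2 (c v') with h | h
          · exact h
          · exact absurd (h1'.trans h.symm) (c.valid hadj')
        obtain ⟨rfl, rfl⟩ := key v u v' u' h0 h0' hadj.symm hadj'.symm
          (by rw [add_comm, hsum, add_comm])
        rfl
    · -- weakness
      intro u v hadj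
      rw [hcardk hadj]
      have hne := c.valid hadj
      rcases hfin2 (c u) with h0 | h1
      · have hv : c v ≠ 0 := fun hcv => hne (h0.trans hcv.symm)
        rw [hcard1 u h0, hcards v hv]; omega
      · have hu : c u ≠ 0 := by rw [h1]; decide
        have hv : c v = 0 := by
          rcases hfin2 (c v) with h | h
          · exact h
          · exact absurd (h1.trans h.symm) hne
        rw [hcards u hu, hcard1 v hv]; omega
end

section
/- If a finite simple graph G admits a weakly k-uniform IASI for some integer k > 1, then G admits an l-uniform IASI for every positive integer l. -/
open Pointwise

open Pointwise

lemma interval_add_singleton (a b l : ℕ) :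
    ((Finset.range l).image (fun i => a + i)) + ({b} : Finset ℕ)
      = (Finset.range l).image (fun i => (a + b) + i) := by
  ext x
  simp only [Finset.mem_add, Finset.mem_image, Finset.mem_range, Finset.mem_singleton]
  constructor
  · rintro ⟨y, ⟨i, hi, rfl⟩, z, rfl, rfl⟩; exact ⟨i, hi, by ring⟩
  · rintro ⟨i, hi, rfl⟩; exact ⟨a + i, ⟨i, hi, rfl⟩, b, rfl, by ring⟩

lemma interval_eq_interval {m m' l : ℕ} (hl : 0 < l)
    (h : (Finset.range l).image (fun i => m + i) = (Finset.range l).image (fun i => m' + i)) :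
    m = m' := by
  have h1 : m ∈ (Finset.range l).image (fun i => m' + i) := by
    rw [← h]; exact Finset.mem_image.2 ⟨0, Finset.mem_range.2 hl, by ring⟩
  have h2 : m' ∈ (Finset.range l).image (fun i => m + i) := by
    rw [h]; exact Finset.mem_image.2 ⟨0, Finset.mem_range.2 hl, by ring⟩
  simp only [Finset.mem_image, Finset.mem_range] at h1 h2
  obtain ⟨i, _, hi⟩ := h1; obtain ⟨j, _, hj⟩ := h2
  omega

lemma encode_inj {N a b a' b' : ℕ} (hb : b < N) (hb' : b' < N)
    (h : N * (a + 1) + b = N * (a' + 1) + b') : a = a' ∧ b = b' := by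
  have key : a = a' := by
    rcases Nat.lt_trichotomy a a' with h1 | h1 | h1
    · exfalso
      have : N * (a + 1) + N ≤ N * (a' + 1) := by
        have := Nat.mul_le_mul_left N (by omega : a + 2 ≤ a' + 1)
        calc N * (a + 1) + N = N * (a + 2) := by ring
          _ ≤ N * (a' + 1) := this
      omega
    · exact h1
    · exfalso
      have : N * (a' + 1) + N ≤ N * (a + 1) := by
        have := Nat.mul_le_mul_left N (by omega : a' + 2 ≤ a + 1)
        calc N * (a' + 1) + N = N * (a' + 2) := by ring
          _ ≤ N * (a + 1) := this
      omega
  subst key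
  exact ⟨rfl, Nat.add_left_cancel h⟩

/-- A graph admitting a weakly `k`-uniform IASI for some `k > 1` admits an
`l`-uniform IASI for every positive integer `l`. -/
theorem weaklyUniform_imp_arbitrarilyUniform {V : Type*} [Fintype V] (G : SimpleGraph V)
    (k : ℕ) (hk : 1 < k)
    (h : ∃ f : V → Finset ℕ, IsWeakIASI G f ∧
      ∀ ⦃u v : V⦄, G.Adj u v → (f u + f v).card = k) :
    ∀ l : ℕ, 0 < l → ∃ f : V → Finset ℕ, IsIASI G f ∧
      ∀ ⦃u v : V⦄, G.Adj u v → (f u + f v).card = l := by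
  classical
  obtain ⟨f, ⟨⟨hne, _, _⟩, hweak⟩, hunif⟩ := h
  intro l hl
  -- On each edge, exactly one endpoint has a non-singleton label.
  set P : V → Prop := fun v => 2 ≤ (f v).card with hPdef
  have hedgeP : ∀ ⦃u v : V⦄, G.Adj u v → (P u ∧ ¬ P v) ∨ (¬ P u ∧ P v) := by
    intro u v huv
    have h1 : 1 ≤ (f u).card := Finset.card_pos.2 (hne u)
    have h2 : 1 ≤ (f v).card := Finset.card_pos.2 (hne v)
    have hmax : max (f u).card (f v).card = k := by rw [← hweak huv, hunif huv]
    have hlb : (f u).card + (f v).card - 1 ≤ (f u + f v).card :=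
      cauchy_davenport_add_of_linearOrder_isCancelAdd (hne u) (hne v)
    rw [hunif huv] at hlb
    simp only [hPdef]
    omega
  -- the encoding
  set n := Fintype.card V with hn
  set e := Fintype.equivFin V with he
  set ι : V → ℕ := fun v => (e v : ℕ) with hι
  have hιlt : ∀ v, ι v < n := fun v => (e v).isLt
  have hιinj : Function.Injective ι := fun a b hab => e.injective (Fin.ext hab)
  set N := n + 1 with hN
  set c : V → ℕ := fun v => if P v then N * (ι v + 1) else ι v with hc
  have hcinj : Function.Injective c := by
    intro a b hab
    simp only [hc] at hab
    by_cases ha : P a <;> by_cases hb : P b <;> simp [ha, hb] at hab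
    · exact hιinj (by omega)
    · exfalso; have := hιlt b; nlinarith [Nat.le_mul_of_pos_right N (by omega : 0 < ι a + 1)]
    · exfalso; have := hιlt a; nlinarith [Nat.le_mul_of_pos_right N (by omega : 0 < ι b + 1)]
    · exact hιinj hab
  set g : V → Finset ℕ := fun v =>
    if P v then (Finset.range l).image (fun i => c v + i) else {c v} with hg
  -- basic facts about g
  have hmem : ∀ v, c v ∈ g v := by
    intro v
    simp only [hg]
    split
    · exact Finset.mem_image.2 ⟨0, Finset.mem_range.2 hl, by ring⟩
    · exact Finset.mem_singleton_self _
  have hbound : ∀ v, ∀ x ∈ g v, c v ≤ x := by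
    intro v x hx
    simp only [hg] at hx
    split at hx
    · obtain ⟨i, _, rfl⟩ := Finset.mem_image.1 hx; omega
    · simp at hx; omega
  have hginj : Function.Injective g := by
    intro a b hab
    apply hcinj
    have h1 := hbound b (c a) (hab ▸ hmem a)
    have h2 := hbound a (c b) (hab.symm ▸ hmem b)
    omega
  -- sumset on edges
  have hsum : ∀ ⦃u v : V⦄, G.Adj u v → P u → ¬ P v →
      g u + g v = (Finset.range l).image (fun i => (N * (ι u + 1) + ι v) + i) := by
    intro u v _ hu hv
    simp only [hg, hc, if_pos hu, if_neg hv]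
    exact interval_add_singleton _ _ _
  have hsum' : ∀ ⦃u v : V⦄, G.Adj u v →
      ∃ p q : V, s(p, q) = s(u, v) ∧ P p ∧ ¬ P q ∧
        g u + g v = (Finset.range l).image (fun i => (N * (ι p + 1) + ι q) + i) := by
    intro u v huv
    rcases hedgeP huv with ⟨hu, hv⟩ | ⟨hu, hv⟩
    · exact ⟨u, v, rfl, hu, hv, hsum huv hu hv⟩
    · exact ⟨v, u, Sym2.eq_swap, hv, hu, by rw [add_comm]; exact hsum huv.symm hv hu⟩
  refine ⟨g, ⟨?_, hginj, ?_⟩, ?_⟩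
  · intro v
    exact ⟨c v, hmem v⟩
  · intro u v u' v' huv hu'v' hgeq
    obtain ⟨p, q, hpq, hp, hq, heq1⟩ := hsum' huv
    obtain ⟨p', q', hpq', hp', hq', heq2⟩ := hsum' hu'v'
    rw [heq1, heq2] at hgeq
    have hm := interval_eq_interval hl hgeq
    obtain ⟨hpp, hqq⟩ := encode_inj (by have := hιlt q; omega) (by have := hιlt q'; omega) hm
    have : p = p' := hιinj hpp
    have : q = q' := hιinj hqq
    rw [← hpq, ← hpq']
    subst_vars
    rfl
  · intro u v huv
    obtain ⟨p, q, _, _, _, heq⟩ := hsum' huv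
    rw [heq, Finset.card_image_of_injective _ (fun x y hxy => by omega), Finset.card_range]
end

section
/- If a finite simple graph G admits a weak IASI, then every subgraph H of G also admits a weak IASI. -/
open Pointwise

/-- If `G` admits a weak IASI, then every subgraph of `G` admits a weak IASI. -/
theorem weakIASI_subgraph {V : Type*} [Fintype V] (G : SimpleGraph V)
    (h : ∃ f : V → Finset ℕ, IsWeakIASI G f) (H : G.Subgraph) :
    ∃ f : H.verts → Finset ℕ, IsWeakIASI H.coe f := by
  obtain ⟨f, ⟨⟨hne, hinj, hedge⟩, hmax⟩⟩ := h
  refine ⟨fun v => f v, ⟨⟨fun v => hne v, fun a b hab => Subtype.ext (hinj hab),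
    fun u v u' v' huv hu'v' hsum => ?_⟩,
    fun u v huv => hmax (H.adj_sub huv)⟩⟩
  have := hedge (H.adj_sub huv) (H.adj_sub hu'v') hsum
  have h2 := Sym2.map.injective (Subtype.val_injective (p := (· ∈ H.verts)))
  apply h2
  simpa [Sym2.map_pair_eq] using this
end

section
/- Every finite bipartite simple graph admits a weak IASI in which no edge is mono-indexed; consequently the sparing number of every bipartite graph is 0. -/
open Pointwise

private lemma fin2_cases (x : Fin 2) : x = 0 ∨ x = 1 := by omega

private lemma pair_sum (a b c : ℕ) : ({a} : Finset ℕ) + {b, c} = {a + b, a + c} := by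
  ext x
  simp [Finset.mem_add]
  tauto

private lemma pair_eq {A B : ℕ} (h : ({A, A+1} : Finset ℕ) = {B, B+1}) : A = B := by
  have h1 := Finset.ext_iff.mp h A
  have h2 := Finset.ext_iff.mp h B
  simp at h1 h2
  omega

private lemma decode {n x x' y y' : ℕ} (hx : x < n) (hx' : x' < n)
    (h : x + n * y = x' + n * y') : x = x' ∧ y = y' := by
  have h1 : (x + n * y) % n = (x' + n * y') % n := by rw [h]
  rw [Nat.add_mul_mod_self_left, Nat.add_mul_mod_self_left,
    Nat.mod_eq_of_lt hx, Nat.mod_eq_of_lt hx'] at h1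
  refine ⟨h1, ?_⟩
  have hn : 0 < n := lt_of_le_of_lt (Nat.zero_le _) hx
  subst h1
  have h2 := Nat.add_left_cancel h
  exact Nat.eq_of_mul_eq_mul_left hn h2

/-- Every finite bipartite simple graph admits a weak IASI with no mono-indexed
edge; consequently its sparing number is `0`. -/
theorem bipartite_weakIASI_sparing_zero {V : Type*} [Fintype V] (G : SimpleGraph V)
    (h : G.Colorable 2) :
    (∃ f : V → Finset ℕ, IsWeakIASI G f ∧ monoEdgeCount G f = 0) ∧
      sparingNumber G = 0 := by
  classical
  obtain ⟨c⟩ := h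
  set n := Fintype.card V with hn
  let e := Fintype.equivFin V
  let ι : V → ℕ := fun v => (e v : ℕ)
  have hι : ∀ v, ι v < n := fun v => (e v).isLt
  have hιinj : Function.Injective ι := fun a b hab => e.injective (Fin.ext hab)
  have hpos : ∀ (_ : V), 0 < n := fun v => lt_of_le_of_lt (Nat.zero_le _) (hι v)
  let f : V → Finset ℕ := fun v =>
    if c v = 0 then {ι v} else {n * ι v, n * ι v + 1}
  have hf0 : ∀ v, c v = 0 → f v = {ι v} := fun v hv => if_pos hv
  have hf1 : ∀ v, c v = 1 → f v = {n * ι v, n * ι v + 1} := by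
    intro v hv
    have : ¬ (c v = 0) := by rw [hv]; decide
    exact if_neg this
  have hcard0 : ∀ v, c v = 0 → (f v).card = 1 := by
    intro v hv; rw [hf0 v hv]; simp
  have hcard1 : ∀ v, c v = 1 → (f v).card = 2 := by
    intro v hv; rw [hf1 v hv]
    exact Finset.card_pair (by omega)
  -- normal form for edges
  have hedge : ∀ u v, G.Adj u v → ∃ a b, s(u,v) = s(a,b) ∧ c a = 0 ∧ c b = 1 ∧
      f u + f v = {ι a + n * ι b, ι a + n * ι b + 1} := by
    intro u v huv
    have hne := c.valid huv
    rcases fin2_cases (c u) with hu | hu <;> rcases fin2_cases (c v) with hv | hv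
    · exact absurd (hu.trans hv.symm) hne
    · exact ⟨u, v, rfl, hu, hv, by rw [hf0 u hu, hf1 v hv, pair_sum, ← add_assoc]⟩
    · refine ⟨v, u, Sym2.eq_swap, hv, hu, ?_⟩
      rw [add_comm, hf0 v hv, hf1 u hu, pair_sum, ← add_assoc]
    · exact absurd (hu.trans hv.symm) hne
  have hsumcard : ∀ u v, G.Adj u v → (f u + f v).card = 2 := by
    intro u v huv
    obtain ⟨a, b, -, -, -, hfe⟩ := hedge u v huv
    rw [hfe]
    exact Finset.card_pair (by omega)
  have hfinj : Function.Injective f := by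
    intro a b hab
    rcases fin2_cases (c a) with ha | ha <;> rcases fin2_cases (c b) with hb | hb
    · rw [hf0 a ha, hf0 b hb] at hab
      exact hιinj (Finset.singleton_injective hab)
    · exfalso
      have := congrArg Finset.card hab
      rw [hcard0 a ha, hcard1 b hb] at this
      omega
    · exfalso
      have := congrArg Finset.card hab
      rw [hcard1 a ha, hcard0 b hb] at this
      omega
    · rw [hf1 a ha, hf1 b hb] at hab
      have h1 := pair_eq hab
      exact hιinj (Nat.eq_of_mul_eq_mul_left (hpos a) h1)
  have hweak : IsWeakIASI G f := by
    refine ⟨⟨?_, hfinj, ?_⟩, ?_⟩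
    · intro v
      rcases fin2_cases (c v) with hv | hv
      · rw [hf0 v hv]; exact Finset.singleton_nonempty _
      · rw [hf1 v hv]; exact Finset.insert_nonempty _ _
    · intro u v u' v' huv hu'v' hsum
      obtain ⟨a, b, hs, ha, hb, hfe⟩ := hedge u v huv
      obtain ⟨a', b', hs', ha', hb', hfe'⟩ := hedge u' v' hu'v'
      rw [hfe, hfe'] at hsum
      have h1 := pair_eq hsum
      obtain ⟨hxa, hxb⟩ := decode (hι a) (hι a') h1
      have haa : a = a' := hιinj hxa
      have hbb : b = b' := hιinj hxb
      rw [hs, hs', haa, hbb]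
    · intro u v huv
      rw [hsumcard u v huv]
      have hne := c.valid huv
      rcases fin2_cases (c u) with hu | hu <;> rcases fin2_cases (c v) with hv | hv
      · exact absurd (hu.trans hv.symm) hne
      · rw [hcard0 u hu, hcard1 v hv]; decide
      · rw [hcard1 u hu, hcard0 v hv]; decide
      · exact absurd (hu.trans hv.symm) hne
  have hmono : monoEdgeCount G f = 0 := by
    have hempty : {e | e ∈ G.edgeSet ∧
        Sym2.lift ⟨fun u v => (f u + f v).card, fun u v => by simp [add_comm]⟩ e = 1}
        = (∅ : Set (Sym2 V)) := by
      ext x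
      induction x using Sym2.ind with
      | _ u v =>
        simp only [Set.mem_setOf_eq, Set.mem_empty_iff_false, iff_false, not_and]
        intro hadj
        rw [SimpleGraph.mem_edgeSet] at hadj
        rw [Sym2.lift_mk]
        simp only
        rw [hsumcard u v hadj]
        omega
    unfold monoEdgeCount
    rw [hempty, Set.ncard_empty]
  refine ⟨⟨f, hweak, hmono⟩, ?_⟩
  exact Nat.sInf_eq_zero.mpr (Or.inl ⟨f, hweak, hmono⟩)
end

section
/- If a finite simple graph G admits a weak IASI in which no edge is mono-indexed, then G is bipartite (i.e., 2-colorable). Equivalently, if G admits a weak IASI and G is not bipartite, then that weak IASI has at least one mono-indexed edge. -/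
open Pointwise

/-- If `G` admits a weak IASI in which no edge is mono-indexed, then `G` is
bipartite. -/
theorem weakIASI_no_mono_imp_bipartite {V : Type*} [Fintype V] (G : SimpleGraph V)
    (f : V → Finset ℕ) (hf : IsWeakIASI G f)
    (hmono : ∀ ⦃u v : V⦄, G.Adj u v → (f u + f v).card ≠ 1) :
    G.Colorable 2 := by
  obtain ⟨⟨hne, -, -⟩, hw⟩ := hf
  -- key: for every edge, exactly one endpoint has singleton label
  have key : ∀ ⦃u v : V⦄, G.Adj u v → ((f u).card = 1 ↔ ¬ (f v).card = 1) := by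
    intro u v huv
    have h1 := hw huv
    have h2 := cauchy_davenport_add_of_linearOrder_isCancelAdd (hne u) (hne v)
    have hu1 : 1 ≤ (f u).card := (hne u).card_pos
    have hv1 : 1 ≤ (f v).card := (hne v).card_pos
    have hmin : (f u).card = 1 ∨ (f v).card = 1 := by
      by_contra h
      push_neg at h
      omega
    have hnboth : ¬ ((f u).card = 1 ∧ (f v).card = 1) := by
      rintro ⟨a, b⟩
      exact hmono huv (by omega)
    tauto
  exact ⟨fun v => if (f v).card = 1 then 0 else 1, by
    intro u v huv
    have := key huv
    by_cases h : (f u).card = 1 <;> simp_all⟩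
end

section
/- In any weak IASI of the complete graph K_n, at most one vertex has a set-label of cardinality greater than 1; all other vertices are labeled by singleton sets. -/
open Pointwise

/-- In any weak IASI of the complete graph, at most one vertex has a set-label of
cardinality greater than `1`; all other vertices are labeled by singletons. -/
theorem weakIASI_complete_subsingleton {V : Type*} [Fintype V] (f : V → Finset ℕ)
    (hf : IsWeakIASI (⊤ : SimpleGraph V) f) :
    {v : V | 1 < (f v).card}.Subsingleton ∧
      ∀ v : V, ¬ 1 < (f v).card → (f v).card = 1 := by
  obtain ⟨⟨hne, -, -⟩, hw⟩ := hf
  constructor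
  · intro u hu v hv
    by_contra h
    have hadj : (⊤ : SimpleGraph V).Adj u v := by simpa using h
    have h1 := hw hadj
    have h2 : (f u).card + (f v).card - 1 ≤ (f u + f v).card :=
      cauchy_davenport_add_of_linearOrder_isCancelAdd (hne u) (hne v)
    simp only [Set.mem_setOf_eq] at hu hv
    rw [h1] at h2
    omega
  · intro v hv
    have := (hne v).card_pos
    omega
end

section
/- For every n ≥ 1, every weak IASI of the complete graph K_n has at least (n−1)(n−2)/2 mono-indexed edges, and K_n admits a weak IASI with exactly (n−1)(n−2)/2 mono-indexed edges; hence the sparing number of K_n is (n−1)(n−2)/2. -/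
open Pointwise

lemma two_pow_pair_eq {a b c d : ℕ} (hab : a ≠ b) (hcd : c ≠ d)
    (h : 2 ^ a + 2 ^ b = 2 ^ c + 2 ^ d) : a = c ∧ b = d ∨ a = d ∧ b = c := by
  have hset : ({a, b} : Finset ℕ) = {c, d} := by
    apply Finset.geomSum_injective (n := 2) le_rfl
    simpa [Finset.sum_pair hab, Finset.sum_pair hcd] using h
  have h1 : a ∈ ({c, d} : Finset ℕ) := by rw [← hset]; simp
  have h2 : b ∈ ({c, d} : Finset ℕ) := by rw [← hset]; simp
  have h3 : c ∈ ({a, b} : Finset ℕ) := by rw [hset]; simp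
  simp only [Finset.mem_insert, Finset.mem_singleton] at h1 h2 h3
  omega

lemma singleton_add_pair (a x y : ℕ) : ({a} : Finset ℕ) + {x, y} = {a + x, a + y} := by
  ext z
  simp only [Finset.mem_add, Finset.mem_insert, Finset.mem_singleton]
  constructor
  · rintro ⟨p, hp, q, hq, rfl⟩; rcases hq with rfl | rfl <;> simp_all
  · rintro (rfl | rfl)
    · exact ⟨a, rfl, x, Or.inl rfl, rfl⟩
    · exact ⟨a, rfl, y, Or.inr rfl, rfl⟩

lemma filter_card_ge {n : ℕ} (f : Fin n → Finset ℕ)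
    (hw : IsWeakIASI (⊤ : SimpleGraph (Fin n)) f) :
    n - 1 ≤ (Finset.univ.filter fun v => (f v).card = 1).card := by
  classical
  obtain ⟨⟨hne, _, _⟩, hweak⟩ := hw
  have hT : (Finset.univ.filter fun v => ¬ (f v).card = 1).card ≤ 1 := by
    rw [Finset.card_le_one]
    intro a ha b hb
    by_contra hab
    simp only [Finset.mem_filter] at ha hb
    have h2a : 2 ≤ (f a).card := by have := (hne a).card_pos; omega
    have h2b : 2 ≤ (f b).card := by have := (hne b).card_pos; omega
    have hadj : (⊤ : SimpleGraph (Fin n)).Adj a b := hab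
    have hcd := cauchy_davenport_add_of_linearOrder_isCancelAdd (hne a) (hne b)
    have := hweak hadj
    omega
  have h2 := Finset.card_filter_add_card_filter_not
    (s := (Finset.univ : Finset (Fin n))) (p := fun v => (f v).card = 1)
  simp only [Finset.card_univ, Fintype.card_fin] at h2
  omega

lemma construction (m : ℕ) :
    ∃ f : Fin (m + 1) → Finset ℕ, IsWeakIASI (⊤ : SimpleGraph (Fin (m + 1))) f ∧
      (Finset.univ.filter fun v => (f v).card = 1).card = m := by
  classical
  set L : Fin (m + 1) := Fin.last m with hL
  set f : Fin (m + 1) → Finset ℕ :=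
    fun i => if i = L then {2 ^ (i : ℕ), 3 * 2 ^ (i : ℕ)} else {2 ^ (i : ℕ)} with hf
  have hpow : ∀ k : ℕ, (2 : ℕ) ^ k ≠ 3 * 2 ^ k := by
    intro k; have := Nat.pow_pos (n := k) (show 0 < 2 by norm_num); omega
  have hfnot : ∀ i, i ≠ L → f i = {2 ^ (i : ℕ)} := fun i h => by simp [hf, h]
  have hfL : f L = {2 ^ (L : ℕ), 3 * 2 ^ (L : ℕ)} := by simp [hf]
  have hcard : ∀ i, (f i).card = if i = L then 2 else 1 := by
    intro i
    by_cases h : i = L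
    · subst h; rw [hfL, Finset.card_pair (hpow _)]; simp
    · rw [hfnot i h]; simp [h]
  have hne : ∀ v, (f v).Nonempty := by
    intro v; by_cases h : v = L
    · subst h; rw [hfL]; exact Finset.insert_nonempty _ _
    · rw [hfnot v h]; exact Finset.singleton_nonempty _
  have hvalinj : ∀ {i j : Fin (m + 1)}, (2 : ℕ) ^ (i : ℕ) = 2 ^ (j : ℕ) → i = j := by
    intro i j h
    exact Fin.val_injective (Nat.pow_right_injective le_rfl h)
  -- sumset computations
  have hsum1 : ∀ {u v : Fin (m + 1)}, u ≠ L → v ≠ L →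
      f u + f v = {2 ^ (u : ℕ) + 2 ^ (v : ℕ)} := by
    intro u v hu hv
    rw [hfnot u hu, hfnot v hv, Finset.singleton_add_singleton]
  have hsum2 : ∀ {u : Fin (m + 1)}, u ≠ L →
      f u + f L = {2 ^ (u : ℕ) + 2 ^ (L : ℕ), 2 ^ (u : ℕ) + 3 * 2 ^ (L : ℕ)} := by
    intro u hu
    rw [hfnot u hu, hfL, singleton_add_pair]
  have hsum2card : ∀ {u : Fin (m + 1)}, u ≠ L → (f u + f L).card = 2 := by
    intro u hu
    rw [hsum2 hu, Finset.card_pair]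
    have := Nat.pow_pos (n := (L : ℕ)) (show 0 < 2 by norm_num)
    omega
  -- injectivity of f
  have hinj : Function.Injective f := by
    intro i j h
    by_cases hi : i = L <;> by_cases hj : j = L
    · rw [hi, hj]
    · exfalso
      have hci := hcard i; have hcj := hcard j
      rw [h] at hci; simp [hi, hj] at hci hcj; omega
    · exfalso
      have hci := hcard i; have hcj := hcard j
      rw [h] at hci; simp [hi, hj] at hci hcj; omega
    · rw [hfnot i hi, hfnot j hj] at h
      exact hvalinj (Finset.singleton_injective h)
  -- normalized edge injectivity
  have key : ∀ u v u' v' : Fin (m + 1), u ≠ v → u' ≠ v' → u ≠ L → u' ≠ L →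
      f u + f v = f u' + f v' → s(u, v) = s(u', v') := by
    intro u v u' v' huv huv' hu hu' h
    by_cases hv : v = L <;> by_cases hv' : v' = L
    · -- both second coords are L
      subst hv; subst hv'
      rw [hsum2 hu, hsum2 hu'] at h
      set A := (2 : ℕ) ^ (u : ℕ) with hA
      set B := (2 : ℕ) ^ (u' : ℕ) with hB
      set C := (2 : ℕ) ^ (L : ℕ) with hC
      have hCpos : 0 < C := Nat.pow_pos (by norm_num)
      have m1 : A + C ∈ ({B + C, B + 3 * C} : Finset ℕ) := by rw [← h]; simp
      have m2 : B + C ∈ ({A + C, A + 3 * C} : Finset ℕ) := by rw [h]; simp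
      simp only [Finset.mem_insert, Finset.mem_singleton] at m1 m2
      have : A = B := by omega
      rw [hvalinj this]
    · -- card contradiction
      exfalso
      subst hv
      have h1 := hsum2card hu
      have h2 : (f u' + f v').card = 1 := by rw [hsum1 hu' hv']; simp
      rw [h] at h1; omega
    · exfalso
      subst hv'
      have h1 := hsum2card hu'
      have h2 : (f u + f v).card = 1 := by rw [hsum1 hu hv]; simp
      rw [← h] at h1; omega
    · rw [hsum1 hu hv, hsum1 hu' hv'] at h
      have hsum := Finset.singleton_injective h
      have huvv : (u : ℕ) ≠ (v : ℕ) := fun h' => huv (Fin.val_injective h')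
      have huvv' : (u' : ℕ) ≠ (v' : ℕ) := fun h' => huv' (Fin.val_injective h')
      rcases two_pow_pair_eq huvv huvv'
        (by simpa using hsum) with ⟨h1, h2⟩ | ⟨h1, h2⟩
      · rw [Fin.val_injective h1, Fin.val_injective h2]
      · rw [Fin.val_injective h1, Fin.val_injective h2, Sym2.eq_swap]
  refine ⟨f, ⟨⟨hne, hinj, ?_⟩, ?_⟩, ?_⟩
  · -- edge injectivity
    intro u v u' v' huv huv' h
    rw [SimpleGraph.top_adj] at huv huv'
    by_cases hu : u = L <;> by_cases hu' : u' = L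
    · -- swap both
      have h' : f v + f u = f v' + f u' := by rw [add_comm (f v), add_comm (f v')]; exact h
      have := key v u v' u' huv.symm huv'.symm (by rw [hu] at huv; exact huv.symm)
        (by rw [hu'] at huv'; exact huv'.symm) h'
      rw [Sym2.eq_swap, this, Sym2.eq_swap]
    · have h' : f v + f u = f u' + f v' := by rw [add_comm (f v)]; exact h
      have := key v u u' v' huv.symm huv' (by rw [hu] at huv; exact huv.symm) hu' h'
      rw [Sym2.eq_swap, this]
    · have h' : f u + f v = f v' + f u' := by rw [add_comm (f v')]; exact h
      have := key u v v' u' huv huv'.symm hu (by rw [hu'] at huv'; exact huv'.symm) h'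
      rw [this, Sym2.eq_swap]
    · exact key u v u' v' huv huv' hu hu' h
  · -- weak condition
    intro u v huv
    rw [SimpleGraph.top_adj] at huv
    by_cases hu : u = L <;> by_cases hv : v = L
    · exact absurd (hu.trans hv.symm) huv
    · subst hu
      rw [add_comm, hsum2card hv, hcard, hcard]; simp [hv]
    · subst hv
      rw [hsum2card hu, hcard, hcard]; simp [hu]
    · rw [hsum1 hu hv, hcard, hcard]; simp [hu, hv]
  · -- count of singleton vertices
    have : (Finset.univ.filter fun v => (f v).card = 1) = Finset.univ.erase L := by
      ext v
      simp only [Finset.mem_filter, Finset.mem_univ, true_and, Finset.mem_erase, and_true]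
      rw [hcard]
      by_cases h : v = L <;> simp [h]
    rw [this, Finset.card_erase_of_mem (Finset.mem_univ _)]
    simp

lemma sumset_card_eq_one_iff {A B : Finset ℕ} (hA : A.Nonempty) (hB : B.Nonempty) :
    (A + B).card = 1 ↔ A.card = 1 ∧ B.card = 1 := by
  constructor
  · intro h
    refine ⟨le_antisymm (h ▸ Finset.card_le_card_add_right hB) hA.card_pos,
      le_antisymm (h ▸ Finset.card_le_card_add_left hA) hB.card_pos⟩
  · rintro ⟨ha, hb⟩
    obtain ⟨a, rfl⟩ := Finset.card_eq_one.1 ha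
    obtain ⟨b, rfl⟩ := Finset.card_eq_one.1 hb
    simp [Finset.singleton_add_singleton]

lemma monoEdgeCount_eq {n : ℕ} (f : Fin n → Finset ℕ) (hf : ∀ v, (f v).Nonempty) :
    monoEdgeCount (⊤ : SimpleGraph (Fin n)) f
      = ((Finset.univ.filter fun v => (f v).card = 1).card).choose 2 := by
  classical
  set S : Finset (Fin n) := Finset.univ.filter fun v => (f v).card = 1 with hS
  have hset : {e | e ∈ (⊤ : SimpleGraph (Fin n)).edgeSet ∧
      Sym2.lift ⟨fun u v => (f u + f v).card, fun u v => by simp [add_comm]⟩ e = 1}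
      = ↑((⊤ : SimpleGraph ↥(S : Finset (Fin n))).edgeFinset.image (Sym2.map Subtype.val)) := by
    ext e
    induction e using Sym2.ind with
    | _ u v =>
      simp only [Set.mem_setOf_eq, SimpleGraph.mem_edgeSet, SimpleGraph.top_adj, Sym2.lift_mk,
        Finset.coe_image, Set.mem_image, Finset.mem_coe, SimpleGraph.mem_edgeFinset]
      constructor
      · rintro ⟨huv, hcard⟩
        rw [sumset_card_eq_one_iff (hf u) (hf v)] at hcard
        have hu : u ∈ S := by simp [hS, hcard.1]
        have hv : v ∈ S := by simp [hS, hcard.2]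
        refine ⟨s(⟨u, hu⟩, ⟨v, hv⟩), ?_, rfl⟩
        rw [SimpleGraph.mem_edgeSet, SimpleGraph.top_adj]
        exact fun h => huv (congrArg Subtype.val h)
      · rintro ⟨e', he', rfl'⟩
        induction e' using Sym2.ind with
        | _ a b =>
          rw [SimpleGraph.mem_edgeSet, SimpleGraph.top_adj] at he'
          simp only [Sym2.map_pair_eq, Sym2.eq_iff] at rfl'
          have ha : (a : Fin n) ∈ S := a.2
          have hb : (b : Fin n) ∈ S := b.2
          simp only [hS, Finset.mem_filter] at ha hb
          have hab : (a : Fin n) ≠ (b : Fin n) := fun h => he' (Subtype.ext h)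
          rcases rfl' with ⟨h1, h2⟩ | ⟨h1, h2⟩
          · subst h1; subst h2
            exact ⟨hab, (sumset_card_eq_one_iff (hf _) (hf _)).2 ⟨ha.2, hb.2⟩⟩
          · subst h1; subst h2
            exact ⟨hab.symm, (sumset_card_eq_one_iff (hf _) (hf _)).2 ⟨hb.2, ha.2⟩⟩
  rw [monoEdgeCount, hset, Set.ncard_coe_finset,
    Finset.card_image_of_injective _ (Sym2.map.injective Subtype.val_injective),
    SimpleGraph.card_edgeFinset_top_eq_card_choose_two, Fintype.card_coe]

/-- Every weak IASI of `K_n` has at least `(n-1)(n-2)/2` mono-indexed edges, this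
bound is attained, and hence the sparing number of `K_n` is `(n-1)(n-2)/2`. -/
theorem sparingNumber_complete (n : ℕ) (hn : 1 ≤ n) :
    (∀ f : Fin n → Finset ℕ, IsWeakIASI (⊤ : SimpleGraph (Fin n)) f →
      (n - 1) * (n - 2) / 2 ≤ monoEdgeCount (⊤ : SimpleGraph (Fin n)) f) ∧
    (∃ f : Fin n → Finset ℕ, IsWeakIASI (⊤ : SimpleGraph (Fin n)) f ∧
      monoEdgeCount (⊤ : SimpleGraph (Fin n)) f = (n - 1) * (n - 2) / 2) ∧
    sparingNumber (⊤ : SimpleGraph (Fin n)) = (n - 1) * (n - 2) / 2 := by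
  obtain ⟨m, rfl⟩ : ∃ m, n = m + 1 := ⟨n - 1, by omega⟩
  have htarget : (m + 1 - 1) * (m + 1 - 2) / 2 = m.choose 2 := by
    rw [Nat.choose_two_right]
    congr 1
  have hlow : ∀ f : Fin (m + 1) → Finset ℕ, IsWeakIASI (⊤ : SimpleGraph (Fin (m + 1))) f →
      (m + 1 - 1) * (m + 1 - 2) / 2 ≤ monoEdgeCount (⊤ : SimpleGraph (Fin (m + 1))) f := by
    intro f hw
    rw [monoEdgeCount_eq f hw.1.1, htarget]
    have hge := filter_card_ge f hw
    exact Nat.choose_le_choose 2 (by omega)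
  have hex : ∃ f : Fin (m + 1) → Finset ℕ, IsWeakIASI (⊤ : SimpleGraph (Fin (m + 1))) f ∧
      monoEdgeCount (⊤ : SimpleGraph (Fin (m + 1))) f = (m + 1 - 1) * (m + 1 - 2) / 2 := by
    obtain ⟨f, hw, hcount⟩ := construction m
    exact ⟨f, hw, by rw [monoEdgeCount_eq f hw.1.1, hcount, htarget]⟩
  refine ⟨hlow, hex, ?_⟩
  obtain ⟨f, hw, hcount⟩ := hex
  apply le_antisymm
  · exact Nat.sInf_le ⟨f, hw, hcount⟩
  · exact le_csInf ⟨_, f, hw, hcount⟩ (by rintro k ⟨g, hwg, rfl⟩; exact hlow g hwg)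
end

section
/- For every odd integer n ≥ 3, every weak IASI of the cycle graph C_n has at least one mono-indexed edge. -/
open Pointwise

/-- For odd `n ≥ 3`, every weak IASI of the cycle `C_n` has at least one
mono-indexed edge. -/
theorem oddCycle_weakIASI_mono_edge (n : ℕ) (hn : 3 ≤ n) (hodd : Odd n)
    (f : Fin n → Finset ℕ) (hf : IsWeakIASI (SimpleGraph.cycleGraph n) f) :
    1 ≤ monoEdgeCount (SimpleGraph.cycleGraph n) f := by
  by_contra hlt
  push_neg at hlt
  interval_cases h : monoEdgeCount (SimpleGraph.cycleGraph n) f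
  unfold monoEdgeCount at h
  rw [Set.ncard_eq_zero (Set.toFinite _)] at h
  -- no mono-indexed edge: for adjacent u v, (f u + f v).card ≠ 1
  have hmono : ∀ ⦃u v : Fin n⦄, (SimpleGraph.cycleGraph n).Adj u v →
      (f u + f v).card ≠ 1 := by
    intro u v huv hc
    have : (s(u, v) : Sym2 (Fin n)) ∈ (∅ : Set (Sym2 (Fin n))) := by
      rw [← h]
      exact ⟨huv, by simpa using hc⟩
    simpa using this
  have hne := hf.1.1
  -- for adjacent u v, exactly one of f u, f v is a singleton
  have key : ∀ ⦃u v : Fin n⦄, (SimpleGraph.cycleGraph n).Adj u v →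
      ((f u).card = 1 ↔ ¬ (f v).card = 1) := by
    intro u v huv
    have hcd : (f u).card + (f v).card - 1 ≤ (f u + f v).card :=
      cauchy_davenport_add_of_linearOrder_isCancelAdd (hne u) (hne v)
    have hw := hf.2 huv
    have hu1 : 1 ≤ (f u).card := Finset.card_pos.mpr (hne u)
    have hv1 : 1 ≤ (f v).card := Finset.card_pos.mpr (hne v)
    have hm := hmono huv
    constructor
    · intro h1 h2
      apply hm
      rw [hw, h1, h2]; simp
    · intro h2
      rw [hw] at hcd
      omega
  -- every v is adjacent to v + 1
  obtain ⟨m, rfl⟩ : ∃ m, n = m + 3 := ⟨n - 3, by omega⟩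
  have hadj : ∀ v : Fin (m + 3), (SimpleGraph.cycleGraph (m + 3)).Adj v (v + 1) := by
    intro v
    rw [show m + 3 = (m + 1) + 2 from rfl] at *
    rw [SimpleGraph.cycleGraph_adj]
    right
    abel
  -- parity argument
  open Fin.NatCast in
  have par : ∀ k : ℕ, ((f ((k : Fin (m + 3)))).card = 1 ↔ (f 0).card = 1) ↔ Even k := by
    intro k
    induction k with
    | zero => simpa using Even.zero
    | succ k ih =>
      have hk := key (hadj (k : Fin (m + 3)))
      rw [Nat.even_add_one, ← ih]
      push_cast
      tauto
  open Fin.NatCast in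
  have hcast : ((m + 3 : ℕ) : Fin (m + 3)) = 0 := by
    simp [Fin.natCast_self]
  exact Nat.not_even_iff_odd.mpr hodd ((par (m + 3)).mp (by rw [hcast]))
end

section
/- For every odd integer n ≥ 3, the cycle graph C_n admits a weak IASI having exactly one mono-indexed edge; hence the sparing number of an odd cycle is 1. -/
open Pointwise

section MyAux

variable {n : ℕ}

/-- Adjacency in the cycle graph, for `n ≥ 2`. -/
lemma myAdj_iff (hn : 2 ≤ n) [NeZero n] {u v : Fin n} :
    (SimpleGraph.cycleGraph n).Adj u v ↔ v = u + 1 ∨ u = v + 1 := by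
  have h1 : ((1 : Fin n) : ℕ) = 1 := (Fin.val_one' n).trans (Nat.mod_eq_of_lt (by omega))
  rw [SimpleGraph.cycleGraph_adj']
  have e1 : ∀ a b : Fin n, ((a - b : Fin n) : ℕ) = 1 ↔ a = b + 1 := by
    intro a b
    constructor
    · intro h
      have : a - b = 1 := Fin.ext (by rw [h, h1])
      rw [sub_eq_iff_eq_add] at this
      rw [this, add_comm]
    · rintro rfl; rw [add_sub_cancel_left, h1]
  rw [e1, e1, or_comm]

lemma myVal_add_one [NeZero n] (w : Fin n) : ((w + 1 : Fin n) : ℕ) = (w.val + 1) % n := by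
  have h := NeZero.pos n
  rcases Nat.lt_or_ge 1 n with h2 | h2
  · rw [Fin.add_def]
    congr 1
    rw [(Fin.val_one' n).trans (Nat.mod_eq_of_lt h2)]
  · have h3 : n = 1 := by have := NeZero.pos n; omega
    subst h3
    simp [Nat.mod_one]

end MyAux

/-- The labeling of `C_n`. -/
def myLab (n : ℕ) (i : Fin n) : Finset ℕ :=
  if Even i.val then {(i : ℕ)} else {(i : ℕ), (i : ℕ) + n}

lemma myLab_nonempty (n : ℕ) (i : Fin n) : (myLab n i).Nonempty := by
  unfold myLab; split <;> simp

lemma myLab_card {n : ℕ} (hn : 0 < n) (i : Fin n) :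
    (myLab n i).card = if Even i.val then 1 else 2 := by
  unfold myLab
  split
  · simp
  · rw [Finset.card_insert_of_notMem (by simp; omega), Finset.card_singleton]

lemma myLab_injective {n : ℕ} : Function.Injective (myLab n) := by
  intro u v h
  have hu : (u : ℕ) ∈ myLab n u := by unfold myLab; split <;> simp
  have hv : (v : ℕ) ∈ myLab n v := by unfold myLab; split <;> simp
  rw [h] at hu
  rw [← h] at hv
  have h1 : (u : ℕ) = v ∨ (u : ℕ) = v + n := by
    unfold myLab at hu; revert hu; split <;> simp <;> tauto
  have h2 : (v : ℕ) = u ∨ (v : ℕ) = u + n := by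
    unfold myLab at hv; revert hv; split <;> simp <;> tauto
  have := u.isLt
  have := v.isLt
  apply Fin.ext
  omega

/-- Explicit computation of the sumset along the edge `{w, w+1}`. -/
lemma myLab_sum {n : ℕ} (hn : 3 ≤ n) (hodd : Odd n) [NeZero n] (w : Fin n) :
    myLab n w + myLab n (w + 1) =
      if (w : ℕ) = n - 1 then {n - 1}
      else {2 * (w : ℕ) + 1, 2 * (w : ℕ) + 1 + n} := by
  have hw := w.isLt
  have hval := myVal_add_one w
  obtain ⟨m, hm⟩ := hodd
  by_cases hb : (w : ℕ) = n - 1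
  · rw [if_pos hb]
    have h1 : ((w + 1 : Fin n) : ℕ) = 0 := by
      rw [hval, hb, Nat.sub_add_cancel (by omega), Nat.mod_self]
    have hwE : Even (w : ℕ) := by rw [hb]; exact ⟨m, by omega⟩
    have h2 : myLab n w = {n - 1} := by unfold myLab; rw [if_pos hwE, hb]
    have h3 : myLab n (w + 1) = {0} := by
      unfold myLab; rw [h1, if_pos (Even.zero)]
    rw [h2, h3, Finset.singleton_add_singleton, Nat.add_zero]
  · rw [if_neg hb]
    have h1 : ((w + 1 : Fin n) : ℕ) = (w : ℕ) + 1 := by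
      rw [hval]; exact Nat.mod_eq_of_lt (by omega)
    rcases Nat.even_or_odd (w : ℕ) with hwE | hwO
    · have h2 : myLab n w = {(w : ℕ)} := by unfold myLab; rw [if_pos hwE]
      have h3 : myLab n (w + 1) = {(w : ℕ) + 1, (w : ℕ) + 1 + n} := by
        unfold myLab
        rw [h1, if_neg (by simp [Nat.even_add_one, hwE])]
      rw [h2, h3]
      ext x
      simp [Finset.mem_add]
      omega
    · have h2 : myLab n w = {(w : ℕ), (w : ℕ) + n} := by
        unfold myLab; rw [if_neg (by simp [Nat.not_odd_iff_even, hwO])]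
      have h3 : myLab n (w + 1) = {(w : ℕ) + 1} := by
        unfold myLab
        rw [h1, if_pos (by simp [Nat.even_add_one, Nat.not_odd_iff_even, hwO])]
      rw [h2, h3]
      ext x
      simp [Finset.mem_add]
      omega

/-- Every edge of the cycle is `{w, w+1}` for some `w`, with matching sumset. -/
lemma myEdge_norm {n : ℕ} (hn : 3 ≤ n) [NeZero n] {u v : Fin n}
    (h : (SimpleGraph.cycleGraph n).Adj u v) (f : Fin n → Finset ℕ) :
    ∃ w : Fin n, s(u, v) = s(w, w + 1) ∧ f u + f v = f w + f (w + 1) := by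
  rw [myAdj_iff (by omega)] at h
  rcases h with rfl | rfl
  · exact ⟨u, rfl, rfl⟩
  · exact ⟨v, Sym2.eq_swap, add_comm _ _⟩

/-- The sumsets along distinct edges are distinct. -/
lemma mySum_inj {n : ℕ} (hn : 3 ≤ n) (hodd : Odd n) [NeZero n] {w w' : Fin n}
    (h : myLab n w + myLab n (w + 1) = myLab n w' + myLab n (w' + 1)) : w = w' := by
  obtain ⟨m, hm⟩ := hodd
  have hw := w.isLt
  have hw' := w'.isLt
  rw [myLab_sum hn ⟨m, hm⟩ w, myLab_sum hn ⟨m, hm⟩ w'] at h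
  apply Fin.ext
  by_cases hb : (w : ℕ) = n - 1 <;> by_cases hb' : (w' : ℕ) = n - 1
  · omega
  · rw [if_pos hb, if_neg hb'] at h
    have h1 : 2 * (w' : ℕ) + 1 ∈ ({n - 1} : Finset ℕ) := by rw [h]; simp
    have h2 : 2 * (w' : ℕ) + 1 + n ∈ ({n - 1} : Finset ℕ) := by rw [h]; simp
    simp at h1 h2
    omega
  · rw [if_neg hb, if_pos hb'] at h
    have h1 : 2 * (w : ℕ) + 1 ∈ ({n - 1} : Finset ℕ) := by rw [← h]; simp
    have h2 : 2 * (w : ℕ) + 1 + n ∈ ({n - 1} : Finset ℕ) := by rw [← h]; simp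
    simp at h1 h2
    omega
  · rw [if_neg hb, if_neg hb'] at h
    have h1 : 2 * (w : ℕ) + 1 ∈ ({2 * (w' : ℕ) + 1, 2 * (w' : ℕ) + 1 + n} : Finset ℕ) := by
      rw [← h]; simp
    have h2 : 2 * (w' : ℕ) + 1 ∈ ({2 * (w : ℕ) + 1, 2 * (w : ℕ) + 1 + n} : Finset ℕ) := by
      rw [h]; simp
    simp at h1 h2
    omega

/-- `myLab` is a weak IASI of the odd cycle. -/
lemma myLab_isWeak {n : ℕ} (hn : 3 ≤ n) (hodd : Odd n) [NeZero n] :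
    IsWeakIASI (SimpleGraph.cycleGraph n) (myLab n) := by
  obtain ⟨m, hm⟩ := hodd
  refine ⟨⟨myLab_nonempty n, myLab_injective, ?_⟩, ?_⟩
  · intro u v u' v' h h' hsum
    obtain ⟨w, hs, he⟩ := myEdge_norm hn h (myLab n)
    obtain ⟨w', hs', he'⟩ := myEdge_norm hn h' (myLab n)
    rw [hs, hs']
    rw [he, he'] at hsum
    rw [mySum_inj hn ⟨m, hm⟩ hsum]
  · intro u v h
    obtain ⟨w, hs, he⟩ := myEdge_norm hn h (myLab n)
    have hmax : max (myLab n u).card (myLab n v).card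
        = max (myLab n w).card (myLab n (w + 1)).card := by
      have := Sym2.eq_iff.mp hs
      rcases this with ⟨rfl, rfl⟩ | ⟨rfl, rfl⟩
      · rfl
      · rw [max_comm]
    rw [he, hmax, myLab_sum hn ⟨m, hm⟩ w, myLab_card (by omega) w,
      myLab_card (by omega) (w + 1)]
    have hw := w.isLt
    have hval := myVal_add_one w
    by_cases hb : (w : ℕ) = n - 1
    · rw [if_pos hb]
      have h1 : ((w + 1 : Fin n) : ℕ) = 0 := by
        rw [hval, hb, Nat.sub_add_cancel (by omega), Nat.mod_self]
      have hwE : Even (w : ℕ) := by rw [hb]; exact ⟨m, by omega⟩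
      rw [if_pos hwE, h1, if_pos Even.zero, Finset.card_singleton]; omega
    · rw [if_neg hb]
      have h1 : ((w + 1 : Fin n) : ℕ) = (w : ℕ) + 1 := by
        rw [hval]; exact Nat.mod_eq_of_lt (by omega)
      have hcard : ({2 * (w : ℕ) + 1, 2 * (w : ℕ) + 1 + n} : Finset ℕ).card = 2 := by
        rw [Finset.card_insert_of_notMem (by simp; omega), Finset.card_singleton]
      rw [hcard, h1]
      rcases Nat.even_or_odd (w : ℕ) with hwE | hwO
      · rw [if_pos hwE, if_neg (by simp [Nat.even_add_one, hwE])]; omega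
      · rw [if_neg (by simp [Nat.not_even_iff_odd, hwO]),
          if_pos (by simp [Nat.even_add_one, Nat.not_even_iff_odd, hwO])]
        omega

/-- The labeling `myLab` has exactly one mono-indexed edge. -/
lemma myLab_monoCount {n : ℕ} (hn : 3 ≤ n) (hodd : Odd n) [NeZero n] :
    monoEdgeCount (SimpleGraph.cycleGraph n) (myLab n) = 1 := by
  obtain ⟨m, hm⟩ := hodd
  set w₀ : Fin n := ⟨n - 1, by omega⟩ with hw₀
  have hw₀1 : w₀ + 1 = 0 := by
    apply Fin.ext
    rw [myVal_add_one, Fin.val_zero]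
    show (n - 1 + 1) % n = 0
    rw [Nat.sub_add_cancel (by omega), Nat.mod_self]
  have hset : {e | e ∈ (SimpleGraph.cycleGraph n).edgeSet ∧
      Sym2.lift ⟨fun u v => (myLab n u + myLab n v).card,
        fun u v => by simp [add_comm]⟩ e = 1} = {s(w₀, w₀ + 1)} := by
    ext e
    induction e using Sym2.ind with
    | _ u v =>
      simp only [Set.mem_setOf_eq, Set.mem_singleton_iff, SimpleGraph.mem_edgeSet,
        Sym2.lift_mk]
      constructor
      · rintro ⟨hadj, hcard⟩
        obtain ⟨w, hs, he⟩ := myEdge_norm hn hadj (myLab n)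
        rw [he, myLab_sum hn ⟨m, hm⟩ w] at hcard
        have hb : (w : ℕ) = n - 1 := by
          by_contra hb
          rw [if_neg hb] at hcard
          rw [Finset.card_insert_of_notMem (by intro hmem; simp at hmem; omega),
            Finset.card_singleton] at hcard
          omega
        have : w = w₀ := Fin.ext (by rw [hb])
        rw [hs, this]
      · intro he
        have hadj : (SimpleGraph.cycleGraph n).Adj w₀ (w₀ + 1) := by
          rw [myAdj_iff (by omega)]; left; rfl
        have h2 : (myLab n w₀ + myLab n (w₀ + 1)).card = 1 := by
          rw [myLab_sum hn ⟨m, hm⟩ w₀, if_pos rfl]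
          exact Finset.card_singleton _
        rcases Sym2.eq_iff.mp he with ⟨rfl, rfl⟩ | ⟨rfl, rfl⟩
        · exact ⟨hadj, h2⟩
        · exact ⟨hadj.symm, by rw [add_comm (myLab n (w₀ + 1))]; exact h2⟩
  rw [monoEdgeCount, hset, Set.ncard_singleton]

open Fin.NatCast in
/-- Any weak IASI of an odd cycle has at least one mono-indexed edge. -/
lemma myLowerBound {n : ℕ} (hn : 3 ≤ n) (hodd : Odd n) [NeZero n]
    (f : Fin n → Finset ℕ) (hf : IsWeakIASI (SimpleGraph.cycleGraph n) f) :
    monoEdgeCount (SimpleGraph.cycleGraph n) f ≠ 0 := by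
  intro h0
  rw [monoEdgeCount, Set.ncard_eq_zero (Set.toFinite _), Set.eq_empty_iff_forall_notMem] at h0
  have hno : ∀ u v : Fin n, (SimpleGraph.cycleGraph n).Adj u v → (f u + f v).card ≠ 1 := by
    intro u v hadj hc
    exact h0 s(u, v) ⟨(SimpleGraph.mem_edgeSet _).mpr hadj, by rwa [Sym2.lift_mk]⟩
  have key : ∀ u v : Fin n, (SimpleGraph.cycleGraph n).Adj u v →
      ((f u).card = 1 ↔ ¬(f v).card = 1) := by
    intro u v hadj
    have h1 : 1 ≤ (f u).card := Finset.card_pos.mpr (hf.1.1 u)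
    have h2 : 1 ≤ (f v).card := Finset.card_pos.mpr (hf.1.1 v)
    have h3 := hf.2 hadj
    have h4 := cauchy_davenport_add_of_linearOrder_isCancelAdd (hf.1.1 u) (hf.1.1 v)
    have h5 := hno u v hadj
    rw [h3] at h4 h5
    rcases Nat.le_total (f u).card (f v).card with h6 | h6
    · rw [max_eq_right h6] at h4 h5; omega
    · rw [max_eq_left h6] at h4 h5; omega
  have step : ∀ k : ℕ, ((f ((k : ℕ) : Fin n)).card = 1 ↔ ¬(f ((k + 1 : ℕ) : Fin n)).card = 1) := by
    intro k
    have hcast : ((k + 1 : ℕ) : Fin n) = ((k : ℕ) : Fin n) + 1 := by push_cast; ring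
    rw [hcast]
    exact key _ _ ((myAdj_iff (by omega)).mpr (Or.inl rfl))
  have gen : ∀ k : ℕ, ((f ((k : ℕ) : Fin n)).card = 1 ↔
      (Even k ↔ (f ((0 : ℕ) : Fin n)).card = 1)) := by
    intro k
    induction k with
    | zero => simp
    | succ k ih =>
      have := step k
      rw [Nat.even_add_one]
      tauto
  have hFinal := gen n
  have hcast : ((n : ℕ) : Fin n) = ((0 : ℕ) : Fin n) := by
    rw [Fin.natCast_self, Nat.cast_zero]
  rw [hcast] at hFinal
  have : ¬ Even n := Nat.not_even_iff_odd.mpr hodd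
  tauto

/-- For odd `n ≥ 3`, the cycle `C_n` admits a weak IASI with exactly one
mono-indexed edge; hence the sparing number of an odd cycle is `1`. -/
theorem oddCycle_sparingNumber_one (n : ℕ) (hn : 3 ≤ n) (hodd : Odd n) :
    (∃ f : Fin n → Finset ℕ, IsWeakIASI (SimpleGraph.cycleGraph n) f ∧
      monoEdgeCount (SimpleGraph.cycleGraph n) f = 1) ∧
    sparingNumber (SimpleGraph.cycleGraph n) = 1 := by
  haveI : NeZero n := ⟨by omega⟩
  have hex : ∃ f : Fin n → Finset ℕ, IsWeakIASI (SimpleGraph.cycleGraph n) f ∧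
      monoEdgeCount (SimpleGraph.cycleGraph n) f = 1 :=
    ⟨myLab n, myLab_isWeak hn hodd, myLab_monoCount hn hodd⟩
  refine ⟨hex, ?_⟩
  have h1 : 1 ∈ {k | ∃ f : Fin n → Finset ℕ,
      IsWeakIASI (SimpleGraph.cycleGraph n) f ∧
      monoEdgeCount (SimpleGraph.cycleGraph n) f = k} := hex
  apply le_antisymm
  · exact Nat.sInf_le h1
  · have hmem := Nat.sInf_mem ⟨1, h1⟩
    obtain ⟨f, hf, hcount⟩ := hmem
    rw [sparingNumber]
    rw [← hcount] at *
    have := myLowerBound hn hodd f hf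
    omega
end

section
/- For every integer n ≥ 3, in any weak IASI of the cycle graph C_n the number of mono-indexed edges has the same parity as n: it is odd when n is odd and even when n is even. -/
open Pointwise

/-- For `n ≥ 3`, in any weak IASI of the cycle `C_n` the number of mono-indexed
edges has the same parity as `n`. -/
theorem cycle_weakIASI_mono_parity (n : ℕ) (hn : 3 ≤ n)
    (f : Fin n → Finset ℕ) (hf : IsWeakIASI (SimpleGraph.cycleGraph n) f) :
    monoEdgeCount (SimpleGraph.cycleGraph n) f % 2 = n % 2 := by
  obtain ⟨m, rfl⟩ : ∃ m, n = m + 3 := ⟨n - 3, by omega⟩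
  obtain ⟨⟨hne, hinj, hind⟩, hweak⟩ := hf
  have hcard1 : ∀ v, 1 ≤ (f v).card := fun v => Finset.card_pos.2 (hne v)
  have key : ∀ u v : Fin (m+3), (SimpleGraph.cycleGraph (m+3)).Adj u v →
      (f u).card = 1 ∨ (f v).card = 1 := by
    intro u v huv
    have h1 := hweak huv
    have h2 : (f u).card + (f v).card - 1 ≤ (f u + f v).card :=
      cauchy_davenport_add_of_linearOrder_isCancelAdd (hne u) (hne v)
    have h3 := hcard1 u; have h4 := hcard1 v
    rcases le_total (f u).card (f v).card with h | h
    · rw [max_eq_right h] at h1; omega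
    · rw [max_eq_left h] at h1; omega
  have hadj : ∀ i : Fin (m+3), (SimpleGraph.cycleGraph (m+3)).Adj i (i+1) := by
    intro i
    rw [show m + 3 = (m+1) + 2 by ring] at *
    rw [SimpleGraph.cycleGraph_adj]
    right; simp
  have hsub : ∀ u v : Fin (m+3), (u - v).val = 1 → u = v + 1 := by
    intro u v h
    have h1 : u - v = 1 := Fin.ext (by simpa [Fin.val_one] using h)
    rw [← h1]; abel
  have hmono : ∀ u v : Fin (m+3), (f u).card = 1 → (f v).card = 1 →
      (f u + f v).card = 1 := by
    intro u v hu hv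
    obtain ⟨a, ha⟩ := Finset.card_eq_one.1 hu
    obtain ⟨b, hb⟩ := Finset.card_eq_one.1 hv
    rw [ha, hb, Finset.singleton_add_singleton, Finset.card_singleton]
  classical
  set M : Finset (Fin (m+3)) :=
    Finset.univ.filter (fun i => (f i).card = 1 ∧ (f (i+1)).card = 1) with hM
  have hset : {e | e ∈ (SimpleGraph.cycleGraph (m+3)).edgeSet ∧
      Sym2.lift ⟨fun u v => (f u + f v).card, fun u v => by simp [add_comm]⟩ e = 1}
      = ↑(M.image (fun i => s(i, i+1))) := by
    ext e
    induction e with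
    | _ u v =>
      simp only [Set.mem_setOf_eq, SimpleGraph.mem_edgeSet, Sym2.lift_mk,
        Finset.coe_image, Set.mem_image, Finset.mem_coe, hM, Finset.mem_filter,
        Finset.mem_univ, true_and]
      constructor
      · rintro ⟨huv, hl⟩
        have hw := hweak huv
        rw [hl] at hw
        have hu : (f u).card = 1 := by
          have := hcard1 u; have := hcard1 v
          rcases le_total (f u).card (f v).card with h | h
          · omega
          · rw [max_eq_left h] at hw; omega
        have hv : (f v).card = 1 := by
          have := hcard1 u; have := hcard1 v
          rcases le_total (f u).card (f v).card with h | h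
          · rw [max_eq_right h] at hw; omega
          · omega
        rw [SimpleGraph.cycleGraph_adj'] at huv
        rcases huv with h | h
        · have huv1 : u = v + 1 := hsub u v h
          exact ⟨v, ⟨hv, huv1 ▸ hu⟩, by rw [← huv1, Sym2.eq_swap]⟩
        · have hvu1 : v = u + 1 := hsub v u h
          exact ⟨u, ⟨hu, hvu1 ▸ hv⟩, by rw [← hvu1]⟩
      · rintro ⟨i, ⟨h1, h2⟩, he⟩
        constructor
        · rw [← SimpleGraph.mem_edgeSet, ← he, SimpleGraph.mem_edgeSet]
          exact hadj i
        · have hc := congrArg (Sym2.lift ⟨fun u v => (f u + f v).card,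
            fun u v => by simp [add_comm]⟩) he
          simp only [Sym2.lift_mk] at hc
          rw [← hc]
          exact hmono _ _ h1 h2
  -- injectivity of i ↦ s(i, i+1)
  have hinj2 : Function.Injective (fun i : Fin (m+3) => s(i, i+1)) := by
    intro i j h
    simp only [Sym2.eq, Sym2.rel_iff', Prod.mk.injEq, Prod.swap_prod_mk] at h
    rcases h with ⟨h1, _⟩ | ⟨h1, h2⟩
    · exact h1
    · exfalso
      rw [← h2, add_assoc] at h1
      have h3 : (1 : Fin (m+3)) + 1 = 0 := left_eq_add.mp h1
      have hv := congrArg Fin.val h3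
      rw [Fin.val_add, Fin.val_one, Fin.val_zero] at hv
      rw [Nat.mod_eq_of_lt (by omega)] at hv
      omega
  rw [monoEdgeCount, hset, Set.ncard_coe_finset, Finset.card_image_of_injective _ hinj2]
  set A := Finset.univ.filter (fun i : Fin (m+3) => 1 < (f i).card) with hA
  set B := Finset.univ.filter (fun i : Fin (m+3) => 1 < (f (i+1)).card) with hB
  have hcompl : Finset.univ.filter
      (fun i : Fin (m+3) => ¬((f i).card = 1 ∧ (f (i+1)).card = 1)) = A ∪ B := by
    ext i
    simp only [hA, hB, Finset.mem_filter, Finset.mem_univ, true_and, Finset.mem_union]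
    have := hcard1 i; have := hcard1 (i+1)
    omega
  have hdisj : Disjoint A B := by
    rw [Finset.disjoint_left]
    intro i hiA hiB
    simp only [hA, hB, Finset.mem_filter, Finset.mem_univ, true_and] at hiA hiB
    rcases key i (i+1) (hadj i) with h | h <;> omega
  have hAB : B.card = A.card := by
    apply Finset.card_bij (fun i _ => i + 1)
    · intro a ha
      simp only [hA, hB, Finset.mem_filter, Finset.mem_univ, true_and] at *
      exact ha
    · intro a _ b _ h
      exact add_right_cancel h
    · intro b hb
      refine ⟨b - 1, ?_, by abel⟩
      simp only [hA, hB, Finset.mem_filter, Finset.mem_univ, true_and] at *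
      simpa using hb
  have htot := Finset.card_filter_add_card_filter_not
    (s := (Finset.univ : Finset (Fin (m+3))))
    (p := fun i => (f i).card = 1 ∧ (f (i+1)).card = 1)
  rw [hcompl, Finset.card_union_of_disjoint hdisj, hAB, Finset.card_univ,
    Fintype.card_fin] at htot
  rw [← hM] at htot
  omega
end
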